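/- arXiv:1112.3988 — 2 statements merged into one kernel-verified Lean document; each statement's English description precedes it below -/
import Mathlib

section
/- Let V be a finite set, P a row-stochastic matrix indexed by V (non-negative entries, each row summing to 1), S ⊆ V nonempty, T = V \ S, and let M = P_TT be the submatrix of P with rows and columns in T. Suppose i ∈ T and there exists s ∈ S and a directed path of length m ≥ 1 from i to s all of whose vertices except the final vertex s lie in T (a sequence i = v_0, …, v_m = s with P_{v_t v_{t+1}} > 0 for all t and v_0, …, v_{m−1} ∈ T). Then for every n ≥ m, ∑_{k∈T} (M^n)_{ik} < 1. -/
open Finset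

/-- Let `P` be a row-stochastic matrix on a finite vertex set `V`, `S` a
nonempty set of vertices and `T = V \ S`. If `i ∈ T` admits a directed path of
length `m ≥ 1` to some vertex of `S` whose vertices, except the final one,
all lie in `T`, then for every `n ≥ m` the `i`-th row sum of the `n`-th power
of the submatrix `P_TT` is strictly less than `1`. -/
theorem row_sum_pow_submatrix_lt_one {V : Type*} [Fintype V] [DecidableEq V]
    (P : Matrix V V ℝ)
    (hP0 : ∀ i j, 0 ≤ P i j) (hP1 : ∀ i, ∑ j, P i j = 1)
    (S : Finset V) (hS : S.Nonempty)
    (i : V) (hi : i ∈ Sᶜ)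
    (m : ℕ) (hm : 1 ≤ m) (v : ℕ → V)
    (hv0 : v 0 = i) (hvm : v m ∈ S)
    (hpath : ∀ t < m, 0 < P (v t) (v (t + 1)))
    (hT : ∀ t < m, v t ∈ Sᶜ)
    (n : ℕ) (hn : m ≤ n) :
    ∑ k : {x // x ∈ Sᶜ},
      (((P.submatrix (fun a : {x // x ∈ Sᶜ} => (a : V))
          (fun a : {x // x ∈ Sᶜ} => (a : V))) ^ n) ⟨i, hi⟩ k) < 1 := by
  set M : Matrix {x // x ∈ Sᶜ} {x // x ∈ Sᶜ} ℝ :=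
    P.submatrix (fun a : {x // x ∈ Sᶜ} => (a : V)) (fun a : {x // x ∈ Sᶜ} => (a : V)) with hM
  -- nonnegativity of powers
  have hMpow0 : ∀ (r : ℕ) (a b : {x // x ∈ Sᶜ}), 0 ≤ (M ^ r) a b := by
    intro r
    induction r with
    | zero => intro a b; by_cases h : a = b <;> simp [Matrix.one_apply, h]
    | succ r ih =>
        intro a b
        rw [pow_succ]
        exact Finset.sum_nonneg fun j _ => mul_nonneg (ih a j) (hP0 _ _)
  -- row sums of M ≤ 1
  have hrow : ∀ a : {x // x ∈ Sᶜ}, ∑ k, M a k ≤ 1 := by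
    intro a
    have h1 : ∑ k : {x // x ∈ Sᶜ}, M a k = ∑ k ∈ Sᶜ, P (a : V) k := by
      rw [← Finset.sum_attach Sᶜ (fun k => P (a : V) k)]
      rfl
    rw [h1, ← hP1 (a : V)]
    exact Finset.sum_le_sum_of_subset_of_nonneg (Finset.subset_univ _)
      (fun j _ _ => hP0 _ _)
  -- row sums of M^r ≤ 1
  have hrowpow : ∀ (r : ℕ) (a : {x // x ∈ Sᶜ}), ∑ k, (M ^ r) a k ≤ 1 := by
    intro r
    induction r with
    | zero => intro a; simp [Matrix.one_apply]
    | succ r ih =>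
        intro a
        have : ∑ k, (M ^ (r + 1)) a k = ∑ j, M a j * ∑ k, (M ^ r) j k := by
          rw [pow_succ']
          simp only [Matrix.mul_apply]
          rw [Finset.sum_comm]
          simp [Finset.mul_sum]
        rw [this]
        calc ∑ j, M a j * ∑ k, (M ^ r) j k ≤ ∑ j, M a j * 1 :=
              Finset.sum_le_sum fun j _ =>
                mul_le_mul_of_nonneg_left (ih j) (hP0 _ _)
          _ = ∑ j, M a j := by simp
          _ ≤ 1 := hrow a
  -- strict inequality along the path, by downward induction
  have key : ∀ d : ℕ, 1 ≤ d → ∀ t : ℕ, t + d = m →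
      ∀ (ht : v t ∈ Sᶜ), ∑ k, (M ^ d) ⟨v t, ht⟩ k < 1 := by
    intro d
    induction d with
    | zero => intro h; omega
    | succ d ih =>
        intro _ t htd ht
        rcases Nat.eq_zero_or_pos d with hd0 | hd1
        · -- d = 0 : single step, last step of path
          subst hd0
          have htm : t + 1 = m := by omega
          have hlt : t < m := by omega
          have hsum : ∑ k, (M ^ 1) ⟨v t, ht⟩ k = ∑ k ∈ Sᶜ, P (v t) k := by
            rw [pow_one, ← Finset.sum_attach Sᶜ (fun k => P (v t) k)]
            rfl
          rw [hsum]
          have hsub : Sᶜ ⊆ Finset.univ.erase (v m) := by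
            intro x hx
            refine Finset.mem_erase.mpr ⟨?_, Finset.mem_univ x⟩
            intro hxe; subst hxe
            exact (Finset.mem_compl.mp hx) hvm
          calc ∑ k ∈ Sᶜ, P (v t) k ≤ ∑ k ∈ Finset.univ.erase (v m), P (v t) k :=
                Finset.sum_le_sum_of_subset_of_nonneg hsub (fun j _ _ => hP0 _ _)
            _ = (∑ k, P (v t) k) - P (v t) (v m) := by
                rw [Finset.sum_erase_eq_sub (Finset.mem_univ _)]
            _ = 1 - P (v t) (v m) := by rw [hP1]
            _ < 1 := by
                have := hpath t hlt
                rw [htm] at this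
                linarith
        · -- d ≥ 1 : use ih at t+1
          have hlt : t < m := by omega
          have ht1 : v (t + 1) ∈ Sᶜ := by
            rcases Nat.lt_or_ge (t+1) m with h | h
            · exact hT _ h
            · omega
          have hih := ih hd1 (t + 1) (by omega) ht1
          set j0 : {x // x ∈ Sᶜ} := ⟨v (t + 1), ht1⟩ with hj0
          have hsum : ∑ k, (M ^ (d + 1)) ⟨v t, ht⟩ k
              = ∑ j, M ⟨v t, ht⟩ j * ∑ k, (M ^ d) j k := by
            rw [pow_succ']
            simp only [Matrix.mul_apply]
            rw [Finset.sum_comm]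
            simp [Finset.mul_sum]
          rw [hsum]
          have hM0 : 0 < M ⟨v t, ht⟩ j0 := hpath t hlt
          calc ∑ j, M ⟨v t, ht⟩ j * ∑ k, (M ^ d) j k
              < ∑ j, M ⟨v t, ht⟩ j * 1 := by
                apply Finset.sum_lt_sum
                · intro j _
                  exact mul_le_mul_of_nonneg_left (hrowpow d j) (hP0 _ _)
                · exact ⟨j0, Finset.mem_univ _,
                    by have := hih; nlinarith⟩
            _ = ∑ j, M ⟨v t, ht⟩ j := by simp
            _ ≤ 1 := hrow _
  -- combine: n = m + r
  obtain ⟨r, rfl⟩ := Nat.exists_eq_add_of_le hn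
  have hvt : v 0 ∈ Sᶜ := hT 0 (by omega)
  have hkey := key m hm 0 (by omega) hvt
  have hieq : (⟨i, hi⟩ : {x // x ∈ Sᶜ}) = ⟨v 0, hvt⟩ := by
    simp [hv0]
  rw [hieq]
  have hsum : ∑ k, (M ^ (m + r)) ⟨v 0, hvt⟩ k
      = ∑ j, (M ^ m) ⟨v 0, hvt⟩ j * ∑ k, (M ^ r) j k := by
    rw [pow_add]
    simp only [Matrix.mul_apply]
    rw [Finset.sum_comm]
    simp [Finset.mul_sum]
  rw [hsum]
  calc ∑ j, (M ^ m) ⟨v 0, hvt⟩ j * ∑ k, (M ^ r) j k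
      ≤ ∑ j, (M ^ m) ⟨v 0, hvt⟩ j * 1 :=
        Finset.sum_le_sum fun j _ =>
          mul_le_mul_of_nonneg_left (hrowpow r j) (hMpow0 m _ j)
    _ = ∑ j, (M ^ m) ⟨v 0, hvt⟩ j := by simp
    _ < 1 := hkey
end

section
/- Let V be a finite set, P a row-stochastic matrix indexed by V (non-negative entries, each row summing to 1), S ⊆ V nonempty, and T = V \ S. Suppose that for every p ∈ T there exists s ∈ S and a directed path from p to s (a sequence p = v_0, v_1, …, v_m = s with P_{v_t v_{t+1}} > 0 for all t). Then the matrix I − P_TT is invertible and (I − P_TT)^{-1} = ∑_{k=0}^∞ (P_TT)^k, where the series of matrix powers converges. -/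
/-!
Write `Q = P_TT` and measure matrices by the `ℓ∞` operator norm `‖A‖ = maxᵢ ∑ⱼ |Aᵢⱼ|`.
As `P` is stochastic, `‖Q‖ ≤ 1`. A vertex with an edge into `S` has row sum `< 1` in `Q`, and
this deficit propagates backwards along edges: if `Pᵢⱼ > 0` and row `j` of `Qᵏ` sums to less
than `1`, so does row `i` of `Qᵏ⁺¹`. Since row sums of powers of `Q` can only decrease, the
connectivity hypothesis yields one power with `‖Qᴹ‖ < 1`. Then `Qᵏ = (Qᴹ)^(k / M) * Q^(k % M)`
decays geometrically, the Neumann series `∑ Qᵏ` converges, and its sum inverts `1 - Q`.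
-/

open Finset

-- `linftyOpNormedSpace` makes the matrices a finite-dimensional normed space, hence complete.
attribute [local instance] Matrix.linftyOpSeminormedAddCommGroup Matrix.linftyOpNormedRing
  Matrix.linftyOpNormedSpace

theorem summable_pow_of_norm_pow_lt_one {R : Type*} [NormedRing R] [CompleteSpace R] {x : R}
    {M : ℕ} (hM : 0 < M) (h : ‖x ^ M‖ < 1) : Summable (x ^ ·) := by
  have : NeZero M := ⟨hM.ne'⟩
  have hprod : Summable fun p : ℕ × Fin M => (x ^ M) ^ p.1 * x ^ (p.2 : ℕ) := by
    apply summable_mul_of_summable_norm (f := fun q : ℕ => (x ^ M) ^ q)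
      (g := fun j : Fin M => x ^ (j : ℕ)) (summable_norm_geometric_of_norm_lt_one h)
    exact .of_finite
  refine ((Nat.divModEquiv M).summable_iff.mpr hprod).congr fun k => ?_
  simp [← pow_mul, ← pow_add, Nat.div_add_mod]

namespace Matrix

variable {l m n α : Type*} [Fintype m] [Fintype n]

theorem linfty_opNorm_le_iff [SeminormedAddCommGroup α] {A : Matrix m n α} {r : ℝ} (hr : 0 ≤ r) :
    ‖A‖ ≤ r ↔ ∀ i, ∑ j, ‖A i j‖ ≤ r := by
  change ‖fun i => WithLp.toLp 1 (A i)‖ ≤ r ↔ _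
  simp [pi_norm_le_iff_of_nonneg hr, PiLp.norm_eq_of_L1]

theorem linfty_opNorm_lt_iff [SeminormedAddCommGroup α] {A : Matrix m n α} {r : ℝ} (hr : 0 < r) :
    ‖A‖ < r ↔ ∀ i, ∑ j, ‖A i j‖ < r := by
  change ‖fun i => WithLp.toLp 1 (A i)‖ < r ↔ _
  simp [pi_norm_lt_iff hr, PiLp.norm_eq_of_L1]

theorem sum_norm_mul_apply_le [NonUnitalSeminormedRing α] (A : Matrix l m α) (B : Matrix m n α)
    (i : l) : ∑ k, ‖(A * B) i k‖ ≤ ∑ j, ‖A i j‖ * ∑ k, ‖B j k‖ :=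
  calc ∑ k, ‖(A * B) i k‖ ≤ ∑ k, ∑ j, ‖A i j‖ * ‖B j k‖ :=
        sum_le_sum fun k _ => norm_sum_le_of_le _ fun j _ => norm_mul_le _ _
    _ = ∑ j, ‖A i j‖ * ∑ k, ‖B j k‖ := by simp_rw [sum_comm (γ := n), mul_sum]

theorem sum_norm_mul_apply_le_mul_norm [NonUnitalSeminormedRing α] (A : Matrix l m α)
    (B : Matrix m n α) (i : l) : ∑ k, ‖(A * B) i k‖ ≤ (∑ j, ‖A i j‖) * ‖B‖ := by
  refine (sum_norm_mul_apply_le A B i).trans ?_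
  rw [sum_mul]
  gcongr with j
  exact (linfty_opNorm_le_iff (norm_nonneg B)).mp le_rfl j

theorem sum_norm_mul_apply_lt_one [NonUnitalNormedRing α] {A : Matrix l m α}
    {B : Matrix m n α} {i : l} {j₀ : m} (hA : ∑ j, ‖A i j‖ ≤ 1) (hB : ‖B‖ ≤ 1)
    (hij₀ : A i j₀ ≠ 0) (hBj₀ : ∑ k, ‖B j₀ k‖ < 1) : ∑ k, ‖(A * B) i k‖ < 1 := by
  have hB' := (linfty_opNorm_le_iff zero_le_one).mp hB
  calc ∑ k, ‖(A * B) i k‖ ≤ ∑ j, ‖A i j‖ * ∑ k, ‖B j k‖ := sum_norm_mul_apply_le A B i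
    _ < ∑ j, ‖A i j‖ :=
        sum_lt_sum (fun j _ => mul_le_of_le_one_right (norm_nonneg _) (hB' j))
          ⟨j₀, mem_univ _, mul_lt_of_lt_one_right (norm_pos_iff.mpr hij₀) hBj₀⟩
    _ ≤ 1 := hA

section Square

variable [NormedRing α] [NormOneClass α] [DecidableEq n]

theorem linfty_opNorm_pow_le_one {A : Matrix n n α} (h : ‖A‖ ≤ 1) (k : ℕ) : ‖A ^ k‖ ≤ 1 := by
  rcases k.eq_zero_or_pos with rfl | hk
  · rcases isEmpty_or_nonempty n
    · simp only [Subsingleton.elim (A ^ 0) 0, norm_zero, zero_le_one]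
    · rw [pow_zero, norm_one]
  · exact (norm_pow_le' A hk).trans (pow_le_one₀ (norm_nonneg A) h)

theorem exists_linfty_opNorm_pow_lt_one {A : Matrix n n α} (h : ‖A‖ ≤ 1)
    (hrow : ∀ i, ∃ k, ∑ j, ‖(A ^ k) i j‖ < 1) : ∃ M, 0 < M ∧ ‖A ^ M‖ < 1 := by
  choose k hk using hrow
  refine ⟨univ.sup k + 1, Nat.succ_pos _, (linfty_opNorm_lt_iff one_pos).mpr fun i => ?_⟩
  have hki : k i ≤ univ.sup k + 1 := (le_sup (mem_univ i)).trans (Nat.le_succ _)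
  calc ∑ j, ‖(A ^ (univ.sup k + 1)) i j‖
      = ∑ j, ‖(A ^ k i * A ^ (univ.sup k + 1 - k i)) i j‖ := by
        rw [← pow_add, Nat.add_sub_cancel' hki]
    _ ≤ (∑ j, ‖(A ^ k i) i j‖) * ‖A ^ (univ.sup k + 1 - k i)‖ :=
        sum_norm_mul_apply_le_mul_norm _ _ i
    _ ≤ (∑ j, ‖(A ^ k i) i j‖) * 1 := by gcongr; exact linfty_opNorm_pow_le_one h _
    _ < 1 := by rw [mul_one]; exact hk i

end Square

section Substochastic

variable {V : Type*} {P : Matrix V V ℝ} {T : Finset V}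

theorem sum_norm_submatrix_apply (hP0 : ∀ i j, 0 ≤ P i j) (i : T) :
    ∑ j, ‖P.submatrix ((↑) : T → V) ((↑) : T → V) i j‖ = ∑ j ∈ T, P i j := by
  simp_rw [submatrix_apply, Real.norm_of_nonneg (hP0 _ _)]
  exact sum_coe_sort T (P i)

variable [Fintype V]

theorem linfty_opNorm_submatrix_le_one (hP0 : ∀ i j, 0 ≤ P i j) (hP1 : ∀ i, ∑ j, P i j = 1) :
    ‖P.submatrix ((↑) : T → V) ((↑) : T → V)‖ ≤ 1 :=
  (linfty_opNorm_le_iff zero_le_one).mpr fun i => by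
    rw [sum_norm_submatrix_apply hP0, ← hP1 i]
    exact sum_le_univ_sum_of_nonneg (hP0 i)

variable [DecidableEq V]

theorem sum_norm_submatrix_apply_lt_one (hP0 : ∀ i j, 0 ≤ P i j) (hP1 : ∀ i, ∑ j, P i j = 1)
    {i : T} {s : V} (hs : s ∉ T) (his : 0 < P i s) :
    ∑ j, ‖P.submatrix ((↑) : T → V) ((↑) : T → V) i j‖ < 1 := by
  rw [sum_norm_submatrix_apply hP0, ← hP1 i, ← sum_add_sum_compl T]
  exact lt_add_of_pos_right _
    (his.trans_le (single_le_sum (fun j _ => hP0 i j) (mem_compl.mpr hs)))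

theorem exists_sum_norm_submatrix_pow_apply_lt_one (hP0 : ∀ i j, 0 ≤ P i j)
    (hP1 : ∀ i, ∑ j, P i j = 1) {m : ℕ} {v : ℕ → V} {p : T} (hv0 : v 0 = p) (hvm : v m ∉ T)
    (hpath : ∀ t < m, 0 < P (v t) (v (t + 1))) :
    ∃ k, ∑ j, ‖(P.submatrix ((↑) : T → V) ((↑) : T → V) ^ k) p j‖ < 1 := by
  induction m generalizing v p with
  | zero => exact absurd (hv0 ▸ p.2) hvm
  | succ m ih =>
    have hp : 0 < P p (v 1) := by rw [← hv0]; exact hpath 0 m.succ_pos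
    by_cases h1 : v 1 ∈ T
    · obtain ⟨k, hk⟩ := ih (v := (v ·.succ)) (p := ⟨v 1, h1⟩) rfl hvm
        fun t ht => hpath (t + 1) (by omega)
      have hQ := linfty_opNorm_submatrix_le_one (T := T) hP0 hP1
      refine ⟨k + 1, ?_⟩
      rw [pow_succ']
      exact sum_norm_mul_apply_lt_one ((linfty_opNorm_le_iff zero_le_one).mp hQ p)
        (linfty_opNorm_pow_le_one hQ k) (j₀ := ⟨v 1, h1⟩) hp.ne' hk
    · exact ⟨1, by rw [pow_one]; exact sum_norm_submatrix_apply_lt_one hP0 hP1 h1 hp⟩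

end Substochastic

end Matrix

theorem isUnit_one_sub_submatrix_of_connected_to_boundary_general
    {V : Type*} [Fintype V] [DecidableEq V]
    (P : Matrix V V ℝ)
    (hP0 : ∀ i j, 0 ≤ P i j) (hP1 : ∀ i, ∑ j, P i j = 1)
    (S : Finset V)
    (hconn : ∀ p ∈ Sᶜ, ∃ (m : ℕ) (v : ℕ → V), v 0 = p ∧ v m ∈ S ∧
      ∀ t < m, 0 < P (v t) (v (t + 1))) :
    IsUnit (1 - P.submatrix (fun a : {x // x ∈ Sᶜ} => (a : V))
        (fun a : {x // x ∈ Sᶜ} => (a : V))) ∧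
    HasSum (fun k : ℕ => (P.submatrix (fun a : {x // x ∈ Sᶜ} => (a : V))
        (fun a : {x // x ∈ Sᶜ} => (a : V))) ^ k)
      (1 - P.submatrix (fun a : {x // x ∈ Sᶜ} => (a : V))
        (fun a : {x // x ∈ Sᶜ} => (a : V)))⁻¹ := by
  set Q := P.submatrix ((↑) : {x // x ∈ Sᶜ} → V) ((↑) : {x // x ∈ Sᶜ} → V)
  obtain ⟨M, hM, hQM⟩ := Matrix.exists_linfty_opNorm_pow_lt_one
    (Matrix.linfty_opNorm_submatrix_le_one hP0 hP1) fun p => by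
      obtain ⟨m, v, hv0, hvm, hpath⟩ := hconn p p.2
      exact Matrix.exists_sum_norm_submatrix_pow_apply_lt_one hP0 hP1 hv0
        (mem_compl.mp · hvm) hpath
  have hsum : Summable (Q ^ ·) := summable_pow_of_norm_pow_lt_one hM hQM
  have hinv : (1 - Q) * ∑' k, Q ^ k = 1 := hsum.one_sub_mul_tsum_pow
  refine ⟨⟨⟨1 - Q, _, hinv, hsum.tsum_pow_mul_one_sub⟩, rfl⟩, ?_⟩
  rw [Matrix.inv_eq_right_inv hinv]
  exact hsum.hasSum

/-- Let `P` be a row-stochastic matrix on a finite vertex set `V`, `S` a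
nonempty set of vertices and `T = V \ S`. If from every vertex of `T` there is
a directed path to some vertex of `S`, then `I - P_TT` is invertible and its
inverse is the sum of the convergent series `∑_{k=0}^∞ (P_TT) ^ k`. -/
theorem isUnit_one_sub_submatrix_of_connected_to_boundary
    {V : Type*} [Fintype V] [DecidableEq V]
    (P : Matrix V V ℝ)
    (hP0 : ∀ i j, 0 ≤ P i j) (hP1 : ∀ i, ∑ j, P i j = 1)
    (S : Finset V) (hS : S.Nonempty)
    (hconn : ∀ p ∈ Sᶜ, ∃ (m : ℕ) (v : ℕ → V), v 0 = p ∧ v m ∈ S ∧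
      ∀ t < m, 0 < P (v t) (v (t + 1))) :
    IsUnit (1 - P.submatrix (fun a : {x // x ∈ Sᶜ} => (a : V))
        (fun a : {x // x ∈ Sᶜ} => (a : V))) ∧
    HasSum (fun k : ℕ => (P.submatrix (fun a : {x // x ∈ Sᶜ} => (a : V))
        (fun a : {x // x ∈ Sᶜ} => (a : V))) ^ k)
      (1 - P.submatrix (fun a : {x // x ∈ Sᶜ} => (a : V))
        (fun a : {x // x ∈ Sᶜ} => (a : V)))⁻¹ :=
  isUnit_one_sub_submatrix_of_connected_to_boundary_general P hP0 hP1 S hconn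
end
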